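/- arXiv:2111.08611 — 4 statements merged into one kernel-verified Lean document; each statement's English description precedes it below -/
import Mathlib

section
/- Let μ_1, …, μ_n ∈ ℝ and for each b-element subset S ⊆ {1,…,n} let μ_S = (1/b)∑_{i∈S} μ_i. Define μ̄ = (1/n)∑_{i: μ_i ≥ 0} μ_i + (4/n)∑_{i: μ_i < 0} μ_i and μ̄_{b-NICE} = (1/C(n,b))(∑_{S: μ_S ≥ 0} μ_S + 4∑_{S: μ_S < 0} μ_S). Then μ̄_{b-NICE} ≥ μ̄. -/
/-!
Both constants are averages of the concave function `x ↦ min x (4 * x)`: the single-sample one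
over the `μ i`, the `b`-nice one over the subset means `μ_S`. By concavity, `min μ_S (4 μ_S)` is at
least the mean over `S` of `min (μ i) (4 * μ i)`, and averaging these means over all `b`-subsets
returns the plain average over `i`, since each `i` lies in exactly `C(n-1, b-1)` of them.
-/

open Finset

theorem Finset.sum_powersetCard_sum {α M : Type*} [DecidableEq α] [AddCommMonoid M]
    (t : Finset α) (k : ℕ) (f : α → M) :
    ∑ S ∈ t.powersetCard (k + 1), ∑ i ∈ S, f i = (#t - 1).choose k • ∑ i ∈ t, f i := by
  rw [sum_comm' (t' := t) (s' := fun i => (t.powersetCard (k + 1)).filter ({i} ⊆ ·))]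
  · rw [smul_sum]
    refine sum_congr rfl fun i hi => ?_
    rw [sum_const, card_filter_powersetCard_subset _ _ _ (singleton_subset_iff.2 hi) (by simp)]
    simp
  · intro S i
    simp only [mem_filter, mem_powersetCard, singleton_subset_iff]
    exact ⟨fun ⟨⟨hSt, hS⟩, hi⟩ => ⟨⟨⟨hSt, hS⟩, hi⟩, hSt hi⟩, fun ⟨h, _⟩ => ⟨h.1, h.2⟩⟩

theorem Finset.inv_choose_mul_sum_powersetCard_mean {α : Type*} [DecidableEq α]
    (t : Finset α) {k : ℕ} (hk : 1 ≤ k) (hkt : k ≤ #t) (f : α → ℝ) :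
    ((#t).choose k : ℝ)⁻¹ * ∑ S ∈ t.powersetCard k, (k : ℝ)⁻¹ * ∑ i ∈ S, f i =
      (#t : ℝ)⁻¹ * ∑ i ∈ t, f i := by
  obtain ⟨j, rfl⟩ : ∃ j, k = j + 1 := ⟨k - 1, by omega⟩
  obtain ⟨m, hm⟩ : ∃ m, #t = m + 1 := ⟨#t - 1, by omega⟩
  have hchoose : ((m + 1 : ℕ) : ℝ) * m.choose j = (m + 1).choose (j + 1) * (j + 1 : ℕ) := by
    exact_mod_cast Nat.add_one_mul_choose_eq m j
  have hpos : (0 : ℝ) < (m + 1).choose (j + 1) := by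
    exact_mod_cast Nat.choose_pos (by omega)
  rw [← mul_sum, sum_powersetCard_sum, hm, Nat.add_sub_cancel, nsmul_eq_mul]
  field_simp
  linear_combination (∑ i ∈ t, f i) * hchoose

theorem Finset.mul_sum_min_le {ι : Type*} (s : Finset ι) (f : ι → ℝ) {a : ℝ} (ha : 0 ≤ a)
    (c : ℝ) :
    a * ∑ i ∈ s, min (f i) (c * f i) ≤ min (a * ∑ i ∈ s, f i) (c * (a * ∑ i ∈ s, f i)) := by
  refine le_min (by gcongr with i; exact min_le_left _ _) ?_
  rw [mul_left_comm, mul_sum _ _ c]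
  gcongr with i
  exact min_le_right _ _

theorem Finset.sum_filter_nonneg_add_mul_sum_filter_neg {ι : Type*} (s : Finset ι)
    (f : ι → ℝ) {c : ℝ} (hc : 1 ≤ c) :
    ∑ i ∈ s with 0 ≤ f i, f i + c * ∑ i ∈ s with f i < 0, f i =
      ∑ i ∈ s, min (f i) (c * f i) := by
  rw [mul_sum, ← sum_filter_add_sum_filter_not s (fun i => 0 ≤ f i)]
  simp only [not_le]
  congr 1 <;> refine sum_congr rfl fun i hi => ?_ <;> rw [mem_filter] at hi
  · rw [min_eq_left (by nlinarith [hi.2])]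
  · rw [min_eq_right (by nlinarith [hi.2])]

theorem stmt_12 {n : ℕ} (b : ℕ) (hb1 : 1 ≤ b) (hbn : b ≤ n) (μ : Fin n → ℝ)
    (μS : Finset (Fin n) → ℝ)
    (hμS : ∀ S, μS S = (1 / (b : ℝ)) * ∑ i ∈ S, μ i) :
    ((1 : ℝ) / (n.choose b)) *
        ((∑ S ∈ (Finset.powersetCard b (Finset.univ : Finset (Fin n))).filter
            (fun S => 0 ≤ μS S), μS S) +
         4 * ∑ S ∈ (Finset.powersetCard b (Finset.univ : Finset (Fin n))).filter
            (fun S => μS S < 0), μS S) ≥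
      (1 / (n : ℝ)) * ∑ i ∈ Finset.univ.filter (fun i => 0 ≤ μ i), μ i +
      (4 / (n : ℝ)) * ∑ i ∈ Finset.univ.filter (fun i => μ i < 0), μ i := by
  have hrhs : (1 / (n : ℝ)) * ∑ i with 0 ≤ μ i, μ i + (4 / (n : ℝ)) * ∑ i with μ i < 0, μ i =
      (n : ℝ)⁻¹ * (∑ i with 0 ≤ μ i, μ i + 4 * ∑ i with μ i < 0, μ i) := by ring
  rw [ge_iff_le, hrhs, sum_filter_nonneg_add_mul_sum_filter_neg _ _ (by norm_num),
    sum_filter_nonneg_add_mul_sum_filter_neg _ _ (by norm_num), one_div]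
  calc (n : ℝ)⁻¹ * ∑ i, min (μ i) (4 * μ i)
      = (n.choose b : ℝ)⁻¹ *
          ∑ S ∈ powersetCard b univ, (b : ℝ)⁻¹ * ∑ i ∈ S, min (μ i) (4 * μ i) := by
        simpa using (inv_choose_mul_sum_powersetCard_mean (univ : Finset (Fin n)) hb1
          (by simpa using hbn) _).symm
    _ ≤ (n.choose b : ℝ)⁻¹ * ∑ S ∈ powersetCard b univ, min (μS S) (4 * μS S) := by
        gcongr with S
        rw [hμS, one_div]
        exact mul_sum_min_le S μ (by positivity) 4
end

section
/- Let F : ℝ^d → ℝ^d be L-Lipschitz and μ-quasi strongly monotone with F(x*) = 0 and μ > 0. For the deterministic extragradient step x⁺ = x − αγ F(x − γ F(x)) with 0 < α ≤ 1/4 and 0 < γ ≤ 1/(6L), one has ‖x⁺ − x*‖² ≤ (1 − αγμ/2)‖x − x*‖². -/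
/-!
Write `g = F x`, `g̃ = F (x - γ g)` and `r = x - x*`. Expanding the square, the claim reduces to a
lower bound on `⟪g̃, r⟫ = ⟪g̃, x - γ g - x*⟫ + γ ⟪g̃, g⟫`. Quasi-strong monotonicity at the extrapolated
point bounds the first term by `μ ‖x - γ g - x*‖² ≥ μ (‖r‖² / 2 - γ² ‖g‖²)`, and Lipschitzness,
`‖g̃ - g‖ ≤ L γ ‖g‖`, bounds the second by `(‖g̃‖² + (1 - L²γ²) ‖g‖²) / 2`. The `‖g̃‖²` term absorbs the
quadratic term `α²γ² ‖g̃‖²` since `α ≤ 1`, and the remaining `‖g‖²` error is at most `L² ‖r‖²`, which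
costs only a factor `γ²L² ≤ 1/36` of the contraction `αγμ ‖r‖²`.
-/

open RealInnerProductSpace

lemma norm_add_sq_le_two_mul {E : Type*} [SeminormedAddCommGroup E] (u v : E) :
    ‖u + v‖ ^ 2 ≤ 2 * ‖u‖ ^ 2 + 2 * ‖v‖ ^ 2 :=
  calc ‖u + v‖ ^ 2 ≤ (‖u‖ + ‖v‖) ^ 2 := pow_le_pow_left₀ (norm_nonneg _) (norm_add_le u v) 2
    _ ≤ 2 * ‖u‖ ^ 2 + 2 * ‖v‖ ^ 2 := by linarith [add_sq_le (a := ‖u‖) (b := ‖v‖)]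

section Extragradient

variable {E : Type*} [NormedAddCommGroup E] [InnerProductSpace ℝ E]

lemma le_two_mul_inner_of_norm_sub_le {a b : E} {c : ℝ} (h : ‖a - b‖ ≤ c) :
    ‖a‖ ^ 2 + ‖b‖ ^ 2 - c ^ 2 ≤ 2 * ⟪a, b⟫ := by
  have hsq : ‖a - b‖ ^ 2 ≤ c ^ 2 := pow_le_pow_left₀ (norm_nonneg _) h 2
  rw [norm_sub_sq_real] at hsq
  linarith

variable {F : E → E} {L μ γ : ℝ} {xstar : E}

lemma extragradient_two_mul_inner_ge (hL : ∀ x y, ‖F x - F y‖ ≤ L * ‖x - y‖)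
    (hmono : ∀ x, μ * ‖x - xstar‖ ^ 2 ≤ ⟪F x, x - xstar⟫) (hμ : 0 ≤ μ) (hγ : 0 ≤ γ) (x : E) :
    μ * ‖x - xstar‖ ^ 2 - 2 * μ * γ ^ 2 * ‖F x‖ ^ 2
        + γ * (‖F (x - γ • F x)‖ ^ 2 + (1 - (L * γ) ^ 2) * ‖F x‖ ^ 2)
      ≤ 2 * ⟪F (x - γ • F x), x - xstar⟫ := by
  set g := F x
  set xt := x - γ • g
  have hsplit : x - xstar = (xt - xstar) + γ • g := by simp only [xt]; abel
  have hmono_xt := hmono xt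
  have hdist : ‖x - xstar‖ ^ 2 ≤ 2 * ‖xt - xstar‖ ^ 2 + 2 * γ ^ 2 * ‖g‖ ^ 2 := by
    have := norm_add_sq_le_two_mul (xt - xstar) (γ • g)
    rwa [← hsplit, norm_smul, mul_pow, Real.norm_eq_abs, sq_abs, ← mul_assoc] at this
  have hcross : ‖F xt‖ ^ 2 + ‖g‖ ^ 2 - (L * γ * ‖g‖) ^ 2 ≤ 2 * ⟪F xt, g⟫ := by
    refine le_two_mul_inner_of_norm_sub_le ((hL xt x).trans_eq ?_)
    rw [show xt - x = -(γ • g) by simp only [xt]; abel, norm_neg, norm_smul, Real.norm_eq_abs,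
      abs_of_nonneg hγ, mul_assoc]
  have hinner_split : ⟪F xt, x - xstar⟫ = ⟪F xt, xt - xstar⟫ + γ * ⟪F xt, g⟫ := by
    rw [hsplit, inner_add_right, real_inner_smul_right]
  rw [hinner_split]
  linarith [mul_le_mul_of_nonneg_left hdist hμ, mul_le_mul_of_nonneg_left hcross hγ]

theorem extragradient_sq_dist_le {α : ℝ} (hL : ∀ x y, ‖F x - F y‖ ≤ L * ‖x - y‖)
    (hmono : ∀ x, μ * ‖x - xstar‖ ^ 2 ≤ ⟪F x, x - xstar⟫) (hstar : F xstar = 0)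
    (hμ : 0 ≤ μ) (hα0 : 0 ≤ α) (hα1 : α ≤ 1) (hγ : 0 ≤ γ) (hL0 : 0 ≤ L) (hLγ : L * γ ≤ 1 / 6)
    (x : E) :
    ‖(x - (α * γ) • F (x - γ • F x)) - xstar‖ ^ 2 ≤ (1 - α * γ * μ / 2) * ‖x - xstar‖ ^ 2 := by
  set g := F x
  set gt := F (x - γ • g)
  have hexpand : ‖(x - (α * γ) • gt) - xstar‖ ^ 2
      = ‖x - xstar‖ ^ 2 - α * γ * (2 * ⟪gt, x - xstar⟫) + (α * γ) ^ 2 * ‖gt‖ ^ 2 := by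
    rw [show x - (α * γ) • gt - xstar = (x - xstar) - (α * γ) • gt by abel, norm_sub_sq_real,
      real_inner_smul_right, norm_smul, mul_pow, Real.norm_eq_abs, sq_abs, real_inner_comm]
    ring
  have hinner := extragradient_two_mul_inner_ge hL hmono hμ hγ x
  have hg : ‖g‖ ^ 2 ≤ L ^ 2 * ‖x - xstar‖ ^ 2 := by
    have : ‖g‖ ≤ L * ‖x - xstar‖ := by simpa [g, hstar] using hL x xstar
    simpa [mul_pow] using pow_le_pow_left₀ (norm_nonneg _) this 2
  have hLγ_sq : (L * γ) ^ 2 ≤ 1 / 36 := by nlinarith [mul_nonneg hL0 hγ]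
  have hαγ : 0 ≤ α * γ := mul_nonneg hα0 hγ
  have hgt_absorbed : 0 ≤ α * γ ^ 2 * (1 - α) * ‖gt‖ ^ 2 := by
    have : 0 ≤ 1 - α := by linarith
    positivity
  have hg_dropped : 0 ≤ α * γ ^ 2 * (1 - (L * γ) ^ 2) * ‖g‖ ^ 2 := by
    have : 0 ≤ 1 - (L * γ) ^ 2 := by linarith
    positivity
  have hg_error : α * γ * μ * (γ ^ 2 * ‖g‖ ^ 2) ≤ α * γ * μ * (1 / 36 * ‖x - xstar‖ ^ 2) := by
    refine mul_le_mul_of_nonneg_left ?_ (mul_nonneg hαγ hμ)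
    linarith [mul_le_mul_of_nonneg_left hg (sq_nonneg γ),
      mul_le_mul_of_nonneg_right hLγ_sq (sq_nonneg ‖x - xstar‖)]
  rw [hexpand]
  linarith [mul_le_mul_of_nonneg_left hinner hαγ,
    mul_nonneg (mul_nonneg hαγ hμ) (sq_nonneg ‖x - xstar‖)]

end Extragradient

theorem stmt_15 {d : ℕ} (F : EuclideanSpace ℝ (Fin d) → EuclideanSpace ℝ (Fin d))
    (L μ α γ : ℝ) (xstar : EuclideanSpace ℝ (Fin d))
    (hL : ∀ x y, ‖F x - F y‖ ≤ L * ‖x - y‖)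
    (hmono : ∀ x, (inner ℝ (F x) (x - xstar) : ℝ) ≥ μ * ‖x - xstar‖ ^ 2)
    (hstar : F xstar = 0) (hμ : 0 < μ)
    (hα0 : 0 < α) (hα : α ≤ 1 / 4) (hγ0 : 0 < γ) (hγ : γ ≤ 1 / (6 * L)) :
    ∀ x, ‖(x - (α * γ) • F (x - γ • F x)) - xstar‖ ^ 2 ≤
      (1 - α * γ * μ / 2) * ‖x - xstar‖ ^ 2 := by
  have hL0 : 0 < L := by
    by_contra! hL0
    have : 1 / (6 * L) ≤ 0 := one_div_nonpos.mpr (by linarith)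
    linarith
  have hLγ : L * γ ≤ 1 / 6 := by
    have := (le_div_iff₀ (by positivity : (0 : ℝ) < 6 * L)).mp hγ
    linarith
  exact extragradient_sq_dist_le hL hmono hstar hμ.le hα0.le (by linarith) hγ0.le hL0.le hLγ
end

section
/- Let F : ℝ^d → ℝ^d be L-Lipschitz with F(x*) = 0 and 0 ≤ μ ≤ L satisfying ⟨F(x) − F(x*), x − x*⟩ ≥ μ‖x − x*‖² for all x. For g = F(x − γF(x)) with 0 < γ ≤ 1/(4μ + √2 L), one has γ²‖g‖² ≤ 4γ⟨g, x − x*⟩. -/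
/-!
Write `u = x - γ F x` and `g = F u`. Since `x - x* = (u - x*) + γ F x`, the inner product
`⟪g, x - x*⟫` splits into `⟪g, u - x*⟫ ≥ 0` (strong monotonicity with `F x* = 0`) and
`γ ⟪g, F x⟫`. The Lipschitz bound gives `‖g - F x‖ ≤ Lγ ‖F x‖` with `(Lγ)² ≤ 1/2` by the step-size
condition, and expanding the square turns this into `‖g‖² ≤ 2 ⟪g, F x⟫`.
-/

open scoped RealInnerProductSpace

section ExtragradientStep

variable {E : Type*} [NormedAddCommGroup E] [InnerProductSpace ℝ E]

theorem norm_sq_le_two_inner_of_norm_sub_le {g v : E} {c : ℝ} (h : ‖g - v‖ ≤ c * ‖v‖)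
    (hc : c ^ 2 ≤ 1 / 2) : ‖g‖ ^ 2 ≤ 2 * ⟪g, v⟫ := by
  have hsq : ‖g - v‖ ^ 2 ≤ c ^ 2 * ‖v‖ ^ 2 := by
    calc ‖g - v‖ ^ 2 ≤ (c * ‖v‖) ^ 2 := pow_le_pow_left₀ (norm_nonneg _) h 2
      _ = c ^ 2 * ‖v‖ ^ 2 := mul_pow c ‖v‖ 2
  have hhalf : c ^ 2 * ‖v‖ ^ 2 ≤ 1 / 2 * ‖v‖ ^ 2 := mul_le_mul_of_nonneg_right hc (sq_nonneg _)
  rw [norm_sub_sq_real] at hsq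
  nlinarith [sq_nonneg ‖v‖]

theorem sq_mul_le_half_of_le_one_div {μ L γ : ℝ} (hμ : 0 ≤ μ) (hL : 0 ≤ L) (hγ0 : 0 < γ)
    (hγ : γ ≤ 1 / (4 * μ + Real.sqrt 2 * L)) : (L * γ) ^ 2 ≤ 1 / 2 := by
  have hden : 0 < 4 * μ + Real.sqrt 2 * L := by
    by_contra hle
    have hzero : 4 * μ + Real.sqrt 2 * L = 0 := le_antisymm (not_lt.mp hle) (by positivity)
    rw [hzero, div_zero] at hγ
    linarith
  have hsqrt : Real.sqrt 2 * (L * γ) ≤ 1 := by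
    have := (le_div_iff₀ hden).mp hγ
    nlinarith [mul_nonneg hμ hγ0.le]
  have hsq : (Real.sqrt 2 * (L * γ)) ^ 2 ≤ 1 := pow_le_one₀ (by positivity) hsqrt
  rw [mul_pow, Real.sq_sqrt zero_le_two] at hsq
  linarith

theorem extragradient_sq_norm_le_two_inner (F : E → E) {L γ : ℝ} (x xstar : E)
    (hL : ∀ y z, ‖F y - F z‖ ≤ L * ‖y - z‖) (hLγ : (L * γ) ^ 2 ≤ 1 / 2) (hγ : 0 ≤ γ)
    (hmono : 0 ≤ ⟪F (x - γ • F x), x - γ • F x - xstar⟫) :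
    γ ^ 2 * ‖F (x - γ • F x)‖ ^ 2 ≤ 2 * (γ * ⟪F (x - γ • F x), x - xstar⟫) := by
  set u := x - γ • F x with hu
  have hstep : ‖F u - F x‖ ≤ L * γ * ‖F x‖ := by
    calc ‖F u - F x‖ ≤ L * ‖u - x‖ := hL u x
      _ = L * γ * ‖F x‖ := by
        rw [hu, sub_sub_cancel_left, norm_neg, norm_smul, Real.norm_of_nonneg hγ, mul_assoc]
  have hsplit : ⟪F u, x - xstar⟫ = ⟪F u, u - xstar⟫ + γ * ⟪F u, F x⟫ := by
    rw [← real_inner_smul_right, ← inner_add_right, hu, sub_right_comm, sub_add_cancel]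
  have hcorr := norm_sq_le_two_inner_of_norm_sub_le hstep hLγ
  calc γ ^ 2 * ‖F u‖ ^ 2 ≤ γ ^ 2 * (2 * ⟪F u, F x⟫) :=
        mul_le_mul_of_nonneg_left hcorr (sq_nonneg γ)
    _ ≤ 2 * (γ * ⟪F u, x - xstar⟫) := by
      rw [hsplit]
      nlinarith [mul_nonneg hγ hmono]

end ExtragradientStep

theorem stmt_17 {d : ℕ} (F : EuclideanSpace ℝ (Fin d) → EuclideanSpace ℝ (Fin d))
    (L μ γ : ℝ) (x xstar : EuclideanSpace ℝ (Fin d))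
    (hL : ∀ y z, ‖F y - F z‖ ≤ L * ‖y - z‖)
    (hμ0 : 0 ≤ μ) (hμL : μ ≤ L)
    (hmono : ∀ y, (inner ℝ (F y - F xstar) (y - xstar) : ℝ) ≥ μ * ‖y - xstar‖ ^ 2)
    (hstar : F xstar = 0)
    (hγ0 : 0 < γ) (hγ : γ ≤ 1 / (4 * μ + Real.sqrt 2 * L)) :
    γ ^ 2 * ‖F (x - γ • F x)‖ ^ 2 ≤
      4 * (γ * (inner ℝ (F (x - γ • F x)) (x - xstar) : ℝ)) := by
  have hLγ := sq_mul_le_half_of_le_one_div hμ0 (hμ0.trans hμL) hγ0 hγ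
  have hmono_step : 0 ≤ ⟪F (x - γ • F x), x - γ • F x - xstar⟫ := by
    have h := hmono (x - γ • F x)
    rw [hstar, sub_zero] at h
    exact (by positivity : 0 ≤ μ * ‖x - γ • F x - xstar‖ ^ 2).trans h
  have hbound := extragradient_sq_norm_le_two_inner F x xstar hL hLγ hγ0.le hmono_step
  have hnonneg : 0 ≤ γ ^ 2 * ‖F (x - γ • F x)‖ ^ 2 := by positivity
  linarith
end

section
/- If a nonnegative sequence r_k satisfies r_{k+1} ≤ (1 − aγ_k) r_k + cγ_k² for all k, with a, c ≥ 0, constants h ≥ a, h > 0, and γ_k chosen as: γ_k = 1/h when K ≤ h/a or k < ⌈K/2⌉, and γ_k = 2/(a(2h/a + k − ⌈K/2⌉)) otherwise; then r_K ≤ (32h/a) r_0 exp(−aK/(2h)) + 36c/(a²K). -/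
/-!
While the stepsize is the constant `1 / h`, the error contracts geometrically:
`r n ≤ (1 - a / h) ^ n r₀ + c / (a h)`, and the `⌈K/2⌉` steps of this phase make
the first term at most `exp (-a K / (2 h)) r₀`. With `s = 2 h / a - 1` the decreasing stepsizes
give `a γ = 2 / (s + 1 + t)`, and then `(s + t) ^ 2 r` grows by at most `4 c / a ^ 2` per step,
because `(s + t + 1) ^ 2 - 2 (s + t + 1) ≤ (s + t) ^ 2`. Dividing by `(s + T) ^ 2` after
`T = ⌊K/2⌋ ≥ K / 3` steps turns the constant-phase residue `c / (a h)` and the accumulated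
`4 c T / a ^ 2` into `O(c / (a ^ 2 K))`. If `K ≤ h / a` the constant phase is the whole run and
`c / (a h) ≤ c / (a ^ 2 K)` directly.
-/

open Real

section Recursion

variable {x : ℕ → ℝ}

theorem le_one_sub_pow_mul_add_of_rec {q e : ℝ} {n : ℕ} (hq : 0 < q) (hq1 : q ≤ 1) (he : 0 ≤ e)
    (hx : ∀ k < n, x (k + 1) ≤ (1 - q) * x k + e) :
    x n ≤ (1 - q) ^ n * x 0 + e / q := by
  induction n with
  | zero => simpa using div_nonneg he hq.le
  | succ n ih =>
    have ih := ih fun k hk => hx k (Nat.lt_succ_of_lt hk)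
    calc x (n + 1) ≤ (1 - q) * x n + e := hx n n.lt_succ_self
      _ ≤ (1 - q) * ((1 - q) ^ n * x 0 + e / q) + e := by gcongr
      _ = (1 - q) ^ (n + 1) * x 0 + e / q := by field_simp; ring

theorem sq_mul_le_of_rec {s e : ℝ} (hs : 0 ≤ s) (hx0 : ∀ t, 0 ≤ x t)
    (hx : ∀ t : ℕ, x (t + 1) ≤ (1 - 2 / (s + 1 + t)) * x t + e / (s + 1 + t) ^ 2) (T : ℕ) :
    (s + T) ^ 2 * x T ≤ s ^ 2 * x 0 + e * T := by
  induction T with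
  | zero => simp
  | succ t ih =>
    have hpos : 0 < s + 1 + t := by positivity
    calc (s + ↑(t + 1)) ^ 2 * x (t + 1)
        ≤ (s + 1 + t) ^ 2 * ((1 - 2 / (s + 1 + t)) * x t + e / (s + 1 + t) ^ 2) := by
          rw [show s + ↑(t + 1) = s + 1 + t by push_cast; ring]
          exact mul_le_mul_of_nonneg_left (hx t) (sq_nonneg _)
      _ = ((s + t) ^ 2 - 1) * x t + e := by field_simp; ring
      _ ≤ (s + t) ^ 2 * x t + e := by linarith [hx0 t]
      _ ≤ s ^ 2 * x 0 + e * ↑(t + 1) := by push_cast; linarith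

end Recursion

theorem le_add_of_two_phase {s T e P ρ y : ℝ} (hs : 0 ≤ s) (hT : 0 < T) (he : 0 ≤ e)
    (hP : 0 ≤ P) (hρ : ρ ≤ P + e / (2 * (s + 1)))
    (hy : (s + T) ^ 2 * y ≤ s ^ 2 * ρ + e * T) :
    y ≤ P + 3 * e / (2 * T) := by
  have hsT : 0 < s + T := by linarith
  have hρ_coeff : s ^ 2 / (2 * (s + 1)) ≤ (s + T) ^ 2 / (2 * T) := by
    rw [div_le_div_iff₀ (by positivity) (by positivity)]
    have : s * T ≤ (s + T) ^ 2 := by nlinarith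
    nlinarith [mul_le_mul_of_nonneg_left this hs]
  have hT_coeff : T ≤ (s + T) ^ 2 / T := by
    rw [le_div_iff₀ hT]; nlinarith
  rw [← mul_le_mul_iff_of_pos_left (pow_pos hsT 2)]
  calc (s + T) ^ 2 * y ≤ s ^ 2 * P + e * (s ^ 2 / (2 * (s + 1)) + T) := by
        have := mul_le_mul_of_nonneg_left hρ (sq_nonneg s)
        rw [mul_add, ← mul_div_assoc, mul_comm (s ^ 2) e, mul_div_assoc] at this
        linarith
    _ ≤ (s + T) ^ 2 * P + e * ((s + T) ^ 2 / (2 * T) + (s + T) ^ 2 / T) := by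
        have : s ^ 2 ≤ (s + T) ^ 2 := by gcongr; linarith
        gcongr
    _ = (s + T) ^ 2 * (P + 3 * e / (2 * T)) := by field_simp; ring

section Stepsizes

variable {r γ : ℕ → ℝ} {a c h : ℝ}

theorem le_exp_mul_add_of_const_step (ha : 0 < a) (hc : 0 ≤ c) (hha : a ≤ h) (hr0 : 0 ≤ r 0)
    (hrec : ∀ k, r (k + 1) ≤ (1 - a * γ k) * r k + c * γ k ^ 2) {n : ℕ}
    (hγ : ∀ k < n, γ k = 1 / h) :
    r n ≤ exp (-(a * n / h)) * r 0 + c / (a * h) := by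
  have hh : 0 < h := ha.trans_le hha
  have hn := le_one_sub_pow_mul_add_of_rec (x := r) (div_pos ha hh) ((div_le_one hh).mpr hha)
    (div_nonneg hc (sq_nonneg h)) (n := n) fun k hk => by
      simpa [hγ k hk, div_eq_mul_inv, mul_pow] using hrec k
  have hpow : (1 - a / h) ^ n ≤ exp (-(a * n / h)) :=
    calc (1 - a / h) ^ n ≤ exp (-(a / h)) ^ n := by
          have : a / h ≤ 1 := (div_le_one hh).mpr hha
          gcongr
          linarith [add_one_le_exp (-(a / h))]
      _ = exp (-(a * n / h)) := by rw [← exp_nat_mul]; ring_nf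
  calc r n ≤ (1 - a / h) ^ n * r 0 + c / h ^ 2 / (a / h) := hn
    _ = (1 - a / h) ^ n * r 0 + c / (a * h) := by field_simp
    _ ≤ exp (-(a * n / h)) * r 0 + c / (a * h) := by gcongr

theorem sq_mul_le_of_decreasing_step (ha : 0 < a) (hha : a ≤ h) (hr : ∀ k, 0 ≤ r k)
    (hrec : ∀ k, r (k + 1) ≤ (1 - a * γ k) * r k + c * γ k ^ 2) {t₀ : ℕ}
    (hγ : ∀ t : ℕ, γ (t₀ + t) = 2 / (a * (2 * h / a + t))) (T : ℕ) :
    (2 * h / a - 1 + T) ^ 2 * r (t₀ + T) ≤ (2 * h / a - 1) ^ 2 * r t₀ + 4 * c / a ^ 2 * T := by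
  have hs : 0 ≤ 2 * h / a - 1 := by rw [sub_nonneg, le_div_iff₀ ha]; linarith
  refine sq_mul_le_of_rec (x := fun t => r (t₀ + t)) hs (fun t => hr _) (fun t => ?_) T
  have hpos : 0 < 2 * h / a + t := by linarith [(t.cast_nonneg : (0 : ℝ) ≤ t)]
  have hstep : a * γ (t₀ + t) = 2 / (2 * h / a - 1 + 1 + t) := by
    rw [hγ t]; field_simp; ring
  have hsq : c * γ (t₀ + t) ^ 2 = 4 * c / a ^ 2 / (2 * h / a - 1 + 1 + t) ^ 2 := by
    rw [hγ t]; field_simp; ring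
  simpa only [hstep, hsq, add_assoc] using hrec (t₀ + t)

theorem exp_neg_mul_le_of_le_two_mul {ρ : ℝ} (ha : 0 < a) (hha : a ≤ h) (hρ : 0 ≤ ρ) {n K : ℕ}
    (hn : (K : ℝ) ≤ 2 * n) :
    exp (-(a * n / h)) * ρ ≤ 32 * h / a * ρ * exp (-(a * K) / (2 * h)) := by
  have hh : 0 < h := ha.trans_le hha
  have h32 : 1 ≤ 32 * h / a := by rw [le_div_iff₀ ha]; linarith
  calc exp (-(a * n / h)) * ρ ≤ exp (-(a * K) / (2 * h)) * ρ := by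
        gcongr
        rw [neg_div, neg_le_neg_iff, div_le_div_iff₀ (by positivity) hh]
        nlinarith [mul_pos ha hh]
    _ ≤ 32 * h / a * ρ * exp (-(a * K) / (2 * h)) := by
        have := exp_pos (-(a * K) / (2 * h))
        nlinarith [mul_nonneg (sub_nonneg.mpr h32) (mul_nonneg this.le hρ)]

theorem le_of_const_step_schedule (hr : ∀ k, 0 ≤ r k) (ha : 0 < a) (hc : 0 ≤ c) (hha : a ≤ h)
    (hrec : ∀ k, r (k + 1) ≤ (1 - a * γ k) * r k + c * γ k ^ 2) {K : ℕ} (hK : 1 ≤ K)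
    (hKh : (K : ℝ) ≤ h / a) (hγ : ∀ k < K, γ k = 1 / h) :
    r K ≤ 32 * h / a * r 0 * exp (-(a * K) / (2 * h)) + 36 * c / (a ^ 2 * K) := by
  have hK' : (1 : ℝ) ≤ K := by exact_mod_cast hK
  have haK : a * K ≤ h := by rwa [le_div_iff₀ ha, mul_comm] at hKh
  have hc_bound : c / (a * h) ≤ 36 * c / (a ^ 2 * K) :=
    calc c / (a * h) ≤ c / (a ^ 2 * K) := by rw [sq, mul_assoc]; gcongr
      _ ≤ 36 * c / (a ^ 2 * K) := by gcongr; linarith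
  linarith [le_exp_mul_add_of_const_step ha hc hha (hr 0) hrec hγ,
    exp_neg_mul_le_of_le_two_mul ha hha (hr 0) (n := K) (K := K) (by linarith)]

theorem le_of_two_phase_schedule (hr : ∀ k, 0 ≤ r k) (ha : 0 < a) (hc : 0 ≤ c) (hha : a ≤ h)
    (hrec : ∀ k, r (k + 1) ≤ (1 - a * γ k) * r k + c * γ k ^ 2) {K : ℕ} (hKh : h / a < K)
    (hγ₁ : ∀ k < (K + 1) / 2, γ k = 1 / h)
    (hγ₂ : ∀ t : ℕ, γ ((K + 1) / 2 + t) = 2 / (a * (2 * h / a + t))) :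
    r K ≤ 32 * h / a * r 0 * exp (-(a * K) / (2 * h)) + 36 * c / (a ^ 2 * K) := by
  have hK2 : 2 ≤ K := by
    have : (1 : ℝ) < K := (one_le_div ha |>.mpr hha).trans_lt hKh
    exact_mod_cast this
  have hs : 0 ≤ 2 * h / a - 1 := by rw [sub_nonneg, le_div_iff₀ ha]; linarith
  have hT : (0 : ℝ) < (K / 2 : ℕ) := by exact_mod_cast (show 0 < K / 2 by omega)
  have hphase₁ := le_exp_mul_add_of_const_step ha hc hha (hr 0) hrec hγ₁
  have hphase₂ := sq_mul_le_of_decreasing_step ha hha hr hrec hγ₂ (K / 2)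
  rw [show (K + 1) / 2 + K / 2 = K by omega] at hphase₂
  have hc_eq : c / (a * h) = 4 * c / a ^ 2 / (2 * (2 * h / a - 1 + 1)) := by
    field_simp; ring
  have hrK := le_add_of_two_phase hs hT (div_nonneg (by linarith) (sq_nonneg a))
    (mul_nonneg (exp_pos _).le (hr 0)) (hc_eq ▸ hphase₁) hphase₂
  have hKT : (K : ℝ) ≤ 3 * (K / 2 : ℕ) := by exact_mod_cast (show K ≤ 3 * (K / 2) by omega)
  have hc_bound : 3 * (4 * c / a ^ 2) / (2 * (K / 2 : ℕ)) ≤ 36 * c / (a ^ 2 * K) :=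
    calc 3 * (4 * c / a ^ 2) / (2 * (K / 2 : ℕ)) = 18 * c / (a ^ 2 * (3 * (K / 2 : ℕ))) := by
          field_simp; ring
      _ ≤ 36 * c / (a ^ 2 * K) := by gcongr; norm_num
  linarith [exp_neg_mul_le_of_le_two_mul ha hha (hr 0) (n := (K + 1) / 2) (K := K)
    (by exact_mod_cast (show K ≤ 2 * ((K + 1) / 2) by omega))]

end Stepsizes

theorem stmt_18_general (r : ℕ → ℝ) (γ : ℕ → ℝ) (a c h : ℝ) (K : ℕ)
    (hr : ∀ k, 0 ≤ r k) (ha : 0 < a) (hc : 0 ≤ c) (hha : a ≤ h)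
    (hK : 1 ≤ K)
    (hγ : ∀ k, γ k =
      if (K : ℝ) ≤ h / a ∨ k < (K + 1) / 2 then 1 / h
      else 2 / (a * (2 * h / a + (k : ℝ) - ((K + 1) / 2 : ℕ))))
    (hrec : ∀ k, r (k + 1) ≤ (1 - a * γ k) * r k + c * γ k ^ 2) :
    r K ≤ (32 * h / a) * r 0 * Real.exp (-(a * K) / (2 * h)) + 36 * c / (a ^ 2 * K) := by
  by_cases hKh : (K : ℝ) ≤ h / a
  · exact le_of_const_step_schedule hr ha hc hha hrec hK hKh
      fun k _ => by rw [hγ, if_pos (Or.inl hKh)]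
  · refine le_of_two_phase_schedule hr ha hc hha hrec (not_le.mp hKh)
      (fun k hk => by rw [hγ, if_pos (Or.inr hk)]) fun t => ?_
    rw [hγ, if_neg (by push Not; exact ⟨not_le.mp hKh, by omega⟩)]
    push_cast
    ring

theorem stmt_18 (r : ℕ → ℝ) (γ : ℕ → ℝ) (a c h : ℝ) (K : ℕ)
    (hr : ∀ k, 0 ≤ r k) (ha : 0 < a) (hc : 0 ≤ c) (hha : a ≤ h) (hh : 0 < h)
    (hK : 1 ≤ K)
    (hγ : ∀ k, γ k =
      if (K : ℝ) ≤ h / a ∨ k < (K + 1) / 2 then 1 / h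
      else 2 / (a * (2 * h / a + (k : ℝ) - ((K + 1) / 2 : ℕ))))
    (hrec : ∀ k, r (k + 1) ≤ (1 - a * γ k) * r k + c * γ k ^ 2) :
    r K ≤ (32 * h / a) * r 0 * Real.exp (-(a * K) / (2 * h)) + 36 * c / (a ^ 2 * K) :=
  stmt_18_general r γ a c h K hr ha hc hha hK hγ hrec
end
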